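/- Let (Y¹, L¹, U¹) and (Y², L², U²) satisfy the doubly reflected Skorokhod conditions with lower obstacle ξ and upper obstacle ζ: ξ ≤ Y^i ≤ ζ, ∫₀^T (Y^i_t − ξ_t) dL^{i,c}_t = ∫₀^T (ζ_t − Y^i_t) dU^{i,c}_t = 0, ΔL^{i,d}_τ = ΔL^{i,d}_τ 1_{Y^i_{τ−}=ξ_{τ−}}, ΔU^{i,d}_τ = ΔU^{i,d}_τ 1_{Y^i_{τ−}=ζ_{τ−}}. Then with y := Y¹ − Y², one has ∫_t^T y_{u−} (dL¹_u − dL²_u − dU¹_u + dU²_u) ≤ 0 for all t ∈ [0,T]. -/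
import Mathlib


open MeasureTheory

/-- doubly reflected Skorokhod conditions imply
`∫ y_{u−} (dL¹ − dL² − dU¹ + dU²) ≤ 0`.  The measures `μL1, μL2, μU1, μU2` are those
generated by `L¹, L², U¹, U²`; `Y1m, Y2m, ξm, ζm` are the left-limit processes; the
minimality conditions say `dL^i` is carried by `{Y^i_{u−} = ξ_{u−}}` and `dU^i` by
`{Y^i_{u−} = ζ_{u−}}`. -/
theorem stmt7 (T t : ℝ) (ht : t ∈ Set.Icc 0 T)
    (Y1 Y2 ξ ζ Y1m Y2m ξm ζm : ℝ → ℝ)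
    (μL1 μL2 μU1 μU2 : Measure ℝ)
    [IsFiniteMeasure μL1] [IsFiniteMeasure μL2] [IsFiniteMeasure μU1] [IsFiniteMeasure μU2]
    (hobs : ∀ s, ξ s ≤ ζ s)
    (hdom1 : ∀ s, ξ s ≤ Y1 s ∧ Y1 s ≤ ζ s) (hdom2 : ∀ s, ξ s ≤ Y2 s ∧ Y2 s ≤ ζ s)
    (hdomm1 : ∀ s, ξm s ≤ Y1m s ∧ Y1m s ≤ ζm s)
    (hdomm2 : ∀ s, ξm s ≤ Y2m s ∧ Y2m s ≤ ζm s)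
    (hskL1 : ∀ᵐ s ∂μL1, Y1m s = ξm s) (hskL2 : ∀ᵐ s ∂μL2, Y2m s = ξm s)
    (hskU1 : ∀ᵐ s ∂μU1, Y1m s = ζm s) (hskU2 : ∀ᵐ s ∂μU2, Y2m s = ζm s)
    (hintL1 : Integrable (fun s => Y1m s - Y2m s) (μL1.restrict (Set.Icc t T)))
    (hintL2 : Integrable (fun s => Y1m s - Y2m s) (μL2.restrict (Set.Icc t T)))
    (hintU1 : Integrable (fun s => Y1m s - Y2m s) (μU1.restrict (Set.Icc t T)))
    (hintU2 : Integrable (fun s => Y1m s - Y2m s) (μU2.restrict (Set.Icc t T))) :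
    (∫ s in Set.Icc t T, (Y1m s - Y2m s) ∂μL1) -
      (∫ s in Set.Icc t T, (Y1m s - Y2m s) ∂μL2) -
      (∫ s in Set.Icc t T, (Y1m s - Y2m s) ∂μU1) +
      (∫ s in Set.Icc t T, (Y1m s - Y2m s) ∂μU2) ≤ 0 := by
  have h1 : (∫ s in Set.Icc t T, (Y1m s - Y2m s) ∂μL1) ≤ 0 := by
    apply integral_nonpos_of_ae
    filter_upwards [ae_restrict_of_ae hskL1] with s hs
    have := (hdomm2 s).1
    simp only [Pi.zero_apply]
    linarith [hs]
  have h2 : 0 ≤ (∫ s in Set.Icc t T, (Y1m s - Y2m s) ∂μL2) := by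
    apply integral_nonneg_of_ae
    filter_upwards [ae_restrict_of_ae hskL2] with s hs
    have := (hdomm1 s).1
    simp only [Pi.zero_apply]
    linarith [hs]
  have h3 : 0 ≤ (∫ s in Set.Icc t T, (Y1m s - Y2m s) ∂μU1) := by
    apply integral_nonneg_of_ae
    filter_upwards [ae_restrict_of_ae hskU1] with s hs
    have := (hdomm2 s).2
    simp only [Pi.zero_apply]
    linarith [hs]
  have h4 : (∫ s in Set.Icc t T, (Y1m s - Y2m s) ∂μU2) ≤ 0 := by
    apply integral_nonpos_of_ae
    filter_upwards [ae_restrict_of_ae hskU2] with s hs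
    have := (hdomm1 s).2
    simp only [Pi.zero_apply]
    linarith [hs]
  linarith
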